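/- The group Γ_T acts freely on ℝ³: every element of Γ_T other than the identity has no fixed point in ℝ³. -/
import Mathlib


noncomputable section

/-- Points of `ℝ³`, written as `(x, y, z)`. -/
abbrev R3 : Type := ℝ × ℝ × ℝ

/-- The translation `T_w : x ↦ x + w` of `ℝ³`, as a bijection (it is an isometry). -/
def transl (w : R3) : Equiv.Perm R3 := Equiv.addRight w

/-- The quarter-turn screw motion `τ(x,y,z) = (−y, x, z+1/2)`, as a bijection
(it is an isometry). -/
def tauE : Equiv.Perm R3 where
  toFun p := (-p.2.1, p.1, p.2.2 + 1/2)
  invFun p := (p.2.1, -p.1, p.2.2 - 1/2)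
  left_inv p := by obtain ⟨x, y, z⟩ := p; simp
  right_inv p := by obtain ⟨x, y, z⟩ := p; simp

/-- The half-turn screw motion `ρ_x(x,y,z) = (x+1/2, −y, −z)`, as a bijection
(it is an isometry). -/
def rhoxE : Equiv.Perm R3 where
  toFun p := (p.1 + 1/2, -p.2.1, -p.2.2)
  invFun p := (p.1 - 1/2, -p.2.1, -p.2.2)
  left_inv p := by obtain ⟨x, y, z⟩ := p; simp
  right_inv p := by obtain ⟨x, y, z⟩ := p; simp

/-- The half-turn screw motion `ρ_y(x,y,z) = (−x, y+1/2, 1−z)`, as a bijection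
(it is an isometry). -/
def rhoyE : Equiv.Perm R3 where
  toFun p := (-p.1, p.2.1 + 1/2, 1 - p.2.2)
  invFun p := (-p.1, p.2.1 - 1/2, 1 - p.2.2)
  left_inv p := by obtain ⟨x, y, z⟩ := p; simp
  right_inv p := by obtain ⟨x, y, z⟩ := p; simp

/-- `Γ_T`, the covering group of the tetracosm Tetra: the group generated by the
translations `T_{(1,0,0)}, T_{(0,1,0)}, T_{(0,0,2)}` and `τ`. -/
def GammaT : Subgroup (Equiv.Perm R3) :=
  Subgroup.closure {transl (1, 0, 0), transl (0, 1, 0), transl (0, 0, 2), tauE}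

/-- `Γ_D`, the covering group of the didicosm Didi: the group generated by the
translations `T_{(1,0,0)}, T_{(0,1,0)}, T_{(0,0,2)}` and `ρ_x`, `ρ_y`. -/
def GammaD : Subgroup (Equiv.Perm R3) :=
  Subgroup.closure {transl (1, 0, 0), transl (0, 1, 0), transl (0, 0, 2), rhoxE, rhoyE}

end

open Complex in
lemma gammaT_form (γ : Equiv.Perm R3) (hγ : γ ∈ GammaT) :
    ∃ (k m : ℤ) (t : ℂ), ∀ p : R3,
      γ p = ((I ^ k * (p.1 + p.2.1 * I) + t).re,
             (I ^ k * (p.1 + p.2.1 * I) + t).im,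
             p.2.2 + k / 2 + 2 * m) := by
  refine Subgroup.closure_induction ?_ ?_ ?_ ?_ hγ
  · rintro g (rfl | rfl | rfl | rfl)
    · exact ⟨0, 0, 1, fun p => by
        obtain ⟨x, y, z⟩ := p
        refine Prod.ext ?_ (Prod.ext ?_ ?_) <;>
          simp [transl, Equiv.addRight] <;> norm_num⟩
    · exact ⟨0, 0, Complex.I, fun p => by
        obtain ⟨x, y, z⟩ := p
        refine Prod.ext ?_ (Prod.ext ?_ ?_) <;>
          simp [transl, Equiv.addRight] <;> norm_num⟩
    · exact ⟨0, 1, 0, fun p => by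
        obtain ⟨x, y, z⟩ := p
        refine Prod.ext ?_ (Prod.ext ?_ ?_) <;>
          simp [transl, Equiv.addRight] <;> norm_num⟩
    · exact ⟨1, 0, 0, fun p => by
        obtain ⟨x, y, z⟩ := p
        refine Prod.ext ?_ (Prod.ext ?_ ?_) <;>
          simp [tauE] <;> norm_num⟩
  · exact ⟨0, 0, 0, fun p => by
      obtain ⟨x, y, z⟩ := p
      refine Prod.ext ?_ (Prod.ext ?_ ?_) <;> simp <;> norm_num⟩
  · rintro g₁ g₂ _ _ ⟨k₁, m₁, t₁, h₁⟩ ⟨k₂, m₂, t₂, h₂⟩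
    refine ⟨k₁ + k₂, m₁ + m₂, I ^ k₁ * t₂ + t₁, fun p => ?_⟩
    have hgg : (g₁ * g₂) p = g₁ (g₂ p) := rfl
    rw [hgg, h₂, h₁]
    have hI : (I ^ k₂ * (↑p.1 + ↑p.2.1 * I) + t₂ : ℂ)
        = ((I ^ k₂ * (↑p.1 + ↑p.2.1 * I) + t₂).re : ℂ)
          + ((I ^ k₂ * (↑p.1 + ↑p.2.1 * I) + t₂).im : ℂ) * I :=
      (Complex.re_add_im _).symm.trans (by ring)
    have hz : I ^ (k₁ + k₂) = I ^ k₁ * I ^ k₂ := zpow_add₀ I_ne_zero _ _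
    refine Prod.ext ?_ (Prod.ext ?_ ?_)
    · simp only [← hI]; congr 1; rw [hz]; ring
    · simp only [← hI]; congr 1; rw [hz]; ring
    · simp only; push_cast; ring
  · rintro g _ ⟨k, m, t, h⟩
    refine ⟨-k, -m, -(I ^ (-k) * t), fun p => ?_⟩
    apply g.injective
    have hgg : g (g⁻¹ p) = p := g.apply_symm_apply p
    rw [hgg, h]
    have hI : ∀ w : ℂ, w = (w.re : ℂ) + (w.im : ℂ) * I :=
      fun w => (Complex.re_add_im w).symm.trans (by ring)
    have h1 : I ^ k * I ^ (-k) = 1 := by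
      rw [← zpow_add₀ I_ne_zero]; simp
    refine Prod.ext ?_ (Prod.ext ?_ ?_)
    all_goals simp only
    · rw [show ((I ^ k * (↑(((I ^ (-k) * (↑p.1 + ↑p.2.1 * I) + -(I ^ (-k) * t)).re : ℝ)) + ↑((I ^ (-k) * (↑p.1 + ↑p.2.1 * I) + -(I ^ (-k) * t)).im : ℝ) * I) + t) : ℂ)
        = ↑p.1 + ↑p.2.1 * I from ?_]
      · simp
      · rw [← hI (I ^ (-k) * (↑p.1 + ↑p.2.1 * I) + -(I ^ (-k) * t))]
        linear_combination (↑p.1 + ↑p.2.1 * I - t) * h1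
    · rw [show ((I ^ k * (↑(((I ^ (-k) * (↑p.1 + ↑p.2.1 * I) + -(I ^ (-k) * t)).re : ℝ)) + ↑((I ^ (-k) * (↑p.1 + ↑p.2.1 * I) + -(I ^ (-k) * t)).im : ℝ) * I) + t) : ℂ)
        = ↑p.1 + ↑p.2.1 * I from ?_]
      · simp
      · rw [← hI (I ^ (-k) * (↑p.1 + ↑p.2.1 * I) + -(I ^ (-k) * t))]
        linear_combination (↑p.1 + ↑p.2.1 * I - t) * h1
    · push_cast; ring

/-- `Γ_T` acts freely on `ℝ³`: every element other than the identity has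
no fixed point. -/
theorem gammaT_free (γ : Equiv.Perm R3) (hγ : γ ∈ GammaT) (hne : γ ≠ 1) (p : R3) :
    γ p ≠ p := by
  obtain ⟨k, m, t, h⟩ := gammaT_form γ hγ
  by_cases hc : (k : ℝ) / 2 + 2 * (m : ℝ) = 0
  · have hk : k = -4 * m := by
      have : (k : ℝ) = ((-4 * m : ℤ) : ℝ) := by push_cast; linarith
      exact_mod_cast this
    have h4 : Complex.I ^ (4 : ℤ) = 1 := by
      rw [show (4 : ℤ) = ((4 : ℕ) : ℤ) by rfl, zpow_natCast]
      norm_num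
    have hI : Complex.I ^ k = 1 := by
      rw [hk, show (-4 * m : ℤ) = 4 * (-m) by ring, zpow_mul, h4, one_zpow]
    have ht : t ≠ 0 := by
      intro ht0
      apply hne
      apply Equiv.ext
      intro q
      rw [h q, hI, ht0]
      show _ = q
      refine Prod.ext ?_ (Prod.ext ?_ ?_) <;> simp
      linarith
    intro heq
    rw [h p, hI] at heq
    apply ht
    obtain ⟨x, y, z⟩ := p
    simp [Prod.ext_iff] at heq
    exact Complex.ext (by simpa using heq.1) (by simpa using heq.2.1)
  · intro heq
    rw [h p] at heq
    have h3 := congrArg (fun q : R3 => q.2.2) heq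
    simp at h3
    exact hc (by linarith)
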